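/- Let E = EuclideanSpace ℝ (Fin n) and μ a Borel probability measure on E. Suppose there exist u₀ ∈ E with ‖u₀‖ < 1 and p₀ ∈ E such that x ↦ ρ_{u₀}(x, p₀) is μ-integrable. Then for every u ∈ E with ‖u‖ < 1, the u-quantile set of μ, i.e. the set {q ∈ E : ∀ p ∈ E, G_u(q) ≤ G_u(p)} of minimizers of G_u, is nonempty and compact. (Euclidean case of Proposition 2.4(b).) -/

import Mathlib

/-!
Since `(1 - ‖u₀‖) ‖p₀ - x‖ ≤ ρ_{u₀}(x, p₀)`, the hypothesis gives `μ` a finite first moment, so every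
`ρ_u(·, p)` is integrable. Each `ρ_u(x, ·)` is `(1 + ‖u‖)`-Lipschitz, hence so is `G_u`, and
`G_u(p) ≥ (1 - ‖u‖) (‖p‖ - ∫ ‖x‖ dμ)` makes `G_u` coercive. A continuous coercive function on a
proper space attains its minimum, and its set of minimizers is closed and contained in a compact set.
-/

open MeasureTheory Filter Topology

/-- The data-based geometric quantile loss in Euclidean space:
`ρ_u(x,p) = ‖p − x‖ − ⟪u, p − x⟫`. -/
noncomputable def quantileLoss {n : ℕ} (u x p : EuclideanSpace ℝ (Fin n)) : ℝ :=
  ‖p - x‖ - inner ℝ u (p - x)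

theorem lipschitzWith_integral {α X E : Type*} [MeasurableSpace α] {μ : Measure α}
    [IsProbabilityMeasure μ] [PseudoMetricSpace X] [NormedAddCommGroup E] [NormedSpace ℝ E]
    {K : NNReal} {F : X → α → E} (hF : ∀ p, Integrable (F p) μ)
    (hK : ∀ x, LipschitzWith K fun p => F p x) :
    LipschitzWith K fun p => ∫ x, F p x ∂μ := by
  refine LipschitzWith.of_dist_le_mul fun p q => ?_
  rw [dist_eq_norm, ← integral_sub (hF p) (hF q)]
  simpa using norm_integral_le_of_norm_le_const (μ := μ)
    (ae_of_all _ fun x => (dist_eq_norm (F p x) (F q x)).symm.trans_le ((hK x).dist_le_mul p q))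

theorem Continuous.isCompact_setOf_forall_le {X α : Type*} [TopologicalSpace X]
    [LinearOrder α] [NoMaxOrder α] [TopologicalSpace α] [OrderClosedTopology α] {f : X → α}
    (hf : Continuous f) (hlim : Tendsto f (cocompact X) atTop) : IsCompact {q | ∀ p, f q ≤ f p} := by
  rcases Set.eq_empty_or_nonempty {q | ∀ p, f q ≤ f p} with hempty | ⟨q, hq⟩
  · simp [hempty]
  obtain ⟨K, hK, hKc⟩ := mem_cocompact.mp (hlim.eventually (eventually_gt_atTop (f q)))
  refine hK.of_isClosed_subset ?_ fun r hr => ?_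
  · simp only [Set.ofPred_forall]
    exact isClosed_iInter fun p => isClosed_le hf continuous_const
  · by_contra hrK
    exact (hKc hrK).not_ge (hr q)

section QuantileLoss

variable {n : ℕ}

theorem lipschitzWith_quantileLoss (u x : EuclideanSpace ℝ (Fin n)) :
    LipschitzWith (1 + ‖u‖₊) fun p => quantileLoss u x p := by
  have hsub : LipschitzWith 1 fun p : EuclideanSpace ℝ (Fin n) => p - x := by
    simpa using LipschitzWith.id.sub (LipschitzWith.const x)
  have hinner : ‖innerSL ℝ u‖₊ = ‖u‖₊ := Subtype.ext (innerSL_apply_norm ℝ u)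
  have h := (lipschitzWith_one_norm.comp hsub).sub ((innerSL ℝ u).lipschitz.comp hsub)
  rwa [hinner, mul_one, mul_one] at h

theorem one_sub_norm_mul_le_quantileLoss (u x p : EuclideanSpace ℝ (Fin n)) :
    (1 - ‖u‖) * ‖p - x‖ ≤ quantileLoss u x p := by
  have := real_inner_le_norm u (p - x)
  rw [quantileLoss]
  linarith

variable {μ : Measure (EuclideanSpace ℝ (Fin n))}

theorem integrable_id_of_integrable_quantileLoss [IsFiniteMeasure μ]
    {u p : EuclideanSpace ℝ (Fin n)} (hu : ‖u‖ < 1)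
    (h : Integrable (fun x => quantileLoss u x p) μ) : Integrable (fun x => x) μ := by
  refine ((integrable_const ‖p‖).add (h.const_mul (1 - ‖u‖)⁻¹)).mono' aestronglyMeasurable_id
    (ae_of_all _ fun x => ?_)
  have hdist : ‖p - x‖ ≤ (1 - ‖u‖)⁻¹ * quantileLoss u x p := by
    rw [le_inv_mul_iff₀ (sub_pos.mpr hu)]
    exact one_sub_norm_mul_le_quantileLoss u x p
  calc ‖x‖ ≤ ‖p‖ + ‖p - x‖ := norm_le_insert p x
    _ ≤ ‖p‖ + (1 - ‖u‖)⁻¹ * quantileLoss u x p := by gcongr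

theorem integrable_quantileLoss [IsFiniteMeasure μ] (hμ : Integrable (fun x => x) μ)
    (u p : EuclideanSpace ℝ (Fin n)) : Integrable (fun x => quantileLoss u x p) μ :=
  ((integrable_const p).sub hμ).norm.sub (((integrable_const p).sub hμ).const_inner u)

theorem tendsto_integral_quantileLoss_cocompact [IsProbabilityMeasure μ]
    (hμ : Integrable (fun x => x) μ) {u : EuclideanSpace ℝ (Fin n)} (hu : ‖u‖ < 1) :
    Tendsto (fun p => ∫ x, quantileLoss u x p ∂μ) (cocompact _) atTop := by
  have hbound : ∀ p, (1 - ‖u‖) * (‖p‖ - ∫ x, ‖x‖ ∂μ) ≤ ∫ x, quantileLoss u x p ∂μ := fun p =>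
    calc (1 - ‖u‖) * (‖p‖ - ∫ x, ‖x‖ ∂μ) = ∫ x, (1 - ‖u‖) * (‖p‖ - ‖x‖) ∂μ := by
          rw [integral_const_mul, integral_sub (integrable_const _) hμ.norm]
          simp
      _ ≤ ∫ x, quantileLoss u x p ∂μ := by
          refine integral_mono (((integrable_const _).sub hμ.norm).const_mul _)
            (integrable_quantileLoss hμ u p) fun x => ?_
          calc (1 - ‖u‖) * (‖p‖ - ‖x‖) ≤ (1 - ‖u‖) * ‖p - x‖ :=
                mul_le_mul_of_nonneg_left (norm_sub_norm_le p x) (sub_nonneg.mpr hu.le)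
            _ ≤ _ := one_sub_norm_mul_le_quantileLoss u x p
  exact tendsto_atTop_mono hbound <|
    (tendsto_atTop_add_const_right _ _ tendsto_norm_cocompact_atTop).const_mul_atTop
      (sub_pos.mpr hu)

end QuantileLoss

/-- Euclidean case of Proposition 2.4(b): under the standing integrability assumption,
for every `u` with `‖u‖ < 1` the `u`-quantile set (the set of minimizers of
`G_u(p) = ∫ ρ_u(x,p) dμ(x)`) is nonempty and compact. -/
theorem quantile_set_nonempty_compact
    {n : ℕ} (μ : Measure (EuclideanSpace ℝ (Fin n))) [IsProbabilityMeasure μ]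
    (hμint : ∃ (u₀ p₀ : EuclideanSpace ℝ (Fin n)), ‖u₀‖ < 1 ∧
      Integrable (fun x => quantileLoss u₀ x p₀) μ)
    (u : EuclideanSpace ℝ (Fin n)) (hu : ‖u‖ < 1) :
    ({q : EuclideanSpace ℝ (Fin n) | ∀ p, ∫ x, quantileLoss u x q ∂μ
        ≤ ∫ x, quantileLoss u x p ∂μ}).Nonempty ∧
    IsCompact {q : EuclideanSpace ℝ (Fin n) | ∀ p, ∫ x, quantileLoss u x q ∂μ
        ≤ ∫ x, quantileLoss u x p ∂μ} := by
  obtain ⟨u₀, p₀, hu₀, hint₀⟩ := hμint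
  have hμ := integrable_id_of_integrable_quantileLoss hu₀ hint₀
  have hcont : Continuous fun p => ∫ x, quantileLoss u x p ∂μ :=
    (lipschitzWith_integral (integrable_quantileLoss hμ u) (lipschitzWith_quantileLoss u)).continuous
  have hlim := tendsto_integral_quantileLoss_cocompact hμ hu
  exact ⟨hcont.exists_forall_le hlim, hcont.isCompact_setOf_forall_le hlim⟩
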